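/- Let s be a positive integer, let ρ = (ρ_1, …, ρ_m) be a vector of integers between 1 and s−1 of length m ≥ 1, and let n ≥ 1, r ≥ 0, c ≥ 0 be integers. Then the number of partitions λ of n with rem_s(λ) = ρ, r_s(λ) = r and c_s(λ) = c equals the number of pairs (γ, μ), where γ = (γ_1, …, γ_m) is a strictly increasing sequence of positive integers and μ is a (possibly empty) partition all of whose parts are divisible by s, such that n = |μ| + (ρ_1 + … + ρ_m) + s·∑_{j=1}^m d_j (γ_j − 1) with (d_1, …, d_m) = d(ρ, γ), and either (μ is empty, c = 0 and r = γ_m − m) or (μ is non-empty, c = μ_1/s and r = max(γ_m, ℓ(μ)) − m). -/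

import Mathlib

/-- A partition: a weakly decreasing list of positive integers. -/
def IsPartition (l : List ℕ) : Prop :=
  l.Pairwise (· ≥ ·) ∧ ∀ x ∈ l, 0 < x

/-- `r_s(λ)`: the number of parts of `λ` divisible by `s`. -/
def partRs (s : ℕ) (l : List ℕ) : ℕ := l.countP (fun x => decide (x % s = 0))

/-- `c_s(λ)`: the number of cells `(i, j)` of the Ferrers diagram of `λ`
with leg length zero and arm length plus one divisible by `s`. -/
def partCs (s : ℕ) (l : List ℕ) : ℕ :=
  ∑ i ∈ Finset.range l.length,
    ((Finset.Icc 1 (l.getD i 0)).filter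
      (fun j => l.getD (i + 1) 0 < j ∧ (l.getD i 0 - j + 1) % s = 0)).card

/-- `rem_s(λ)`: the sequence of non-zero remainders of the parts of `λ`
upon division by `s`, in the order of the parts. -/
def partRem (s : ℕ) (l : List ℕ) : List ℕ :=
  (l.map (fun x => x % s)).filter (fun x => decide (x ≠ 0))

/-- `d(ρ, γ)_j` for the 0-indexed position `j` (corresponding to the 1-indexed
position `j + 1`): it is `0` if `j ≥ 1`, `ρ_j ≥ ρ_{j+1}` and `γ_{j+1} = γ_j + 1`
(1-indexed), and `1` otherwise. -/
def dseq (ρ γ : List ℕ) (j : ℕ) : ℕ :=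
  if 0 < j ∧ ρ.getD j 0 ≤ ρ.getD (j - 1) 0 ∧ γ.getD j 0 = γ.getD (j - 1) 0 + 1
  then 0 else 1

/-!
Write the parts of `λ` as `λ_i = s q_i + u_i` with `u_i < s`. The nonzero remainders sit in rows
`γ_1 < ⋯ < γ_m` and read `ρ`; call `j` a break if `d_j = 1`. Passing from row `t` to row `t + 1`
the remainder goes up exactly at a break, and there the quotient has to drop. So after subtracting
`carry t`, the number of breaks in rows after `t`, the quotients still decrease, and
`μ_t = s (q_t - carry t)` is a partition into multiples of `s`. Conversely
`λ_t = μ_t + s carry t + u_t` is a partition for every such pair `(γ, μ)`, and the two constructions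
are mutually inverse. Along the bijection, `Σ_t carry t = Σ_j d_j (γ_j - 1)` gives `|λ|`, the parts
divisible by `s` are the rows without remainder, and
`c_s(λ) = λ_1 / s - #{t | u_t < u_{t+1}} = λ_1 / s - carry 1 = μ_1 / s`.
-/

open Finset

section Lists

variable {l l' : List ℕ} {i t : ℕ}

theorem getD_mem_of_lt (h : i < l.length) : l.getD i 0 ∈ l := by
  rw [List.getD_eq_getElem _ _ h]
  exact List.getElem_mem h

theorem mem_iff_exists_getD : t ∈ l ↔ ∃ j < l.length, l.getD j 0 = t := by
  simp only [List.mem_iff_getElem]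
  constructor
  · rintro ⟨j, hj, rfl⟩
    exact ⟨j, hj, List.getD_eq_getElem _ _ hj⟩
  · rintro ⟨j, hj, rfl⟩
    exact ⟨j, hj, (List.getD_eq_getElem _ _ hj).symm⟩

theorem antitone_getD (h : l.Pairwise (· ≥ ·)) : Antitone (l.getD · 0) := by
  refine antitone_nat_of_succ_le fun i => ?_
  rcases lt_or_ge (i + 1) l.length with hi | hi
  · rw [List.getD_eq_getElem _ _ hi, List.getD_eq_getElem _ _ (by omega)]
    exact List.pairwise_iff_getElem.1 h i (i + 1) (by omega) hi (by omega)
  · rw [List.getD_eq_default _ _ hi]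
    exact Nat.zero_le _

theorem sum_range_getD (h : l.length ≤ i) : ∑ j ∈ range i, l.getD j 0 = l.sum := by
  rw [← sum_subset (range_subset_range.2 h) fun j hj hj' => by
    simp only [mem_range, not_lt] at hj hj'
    exact List.getD_eq_default _ _ hj']
  simp [sum_range]

theorem sum_map_range (f : ℕ → ℕ) (n : ℕ) : ((List.range n).map f).sum = ∑ i ∈ range n, f i := by
  rw [sum_eq_multiset_sum]
  rfl

theorem sum_filter_ne_zero (l : List ℕ) : (l.filter (· ≠ 0)).sum = l.sum := by
  rw [← List.sum_filter_bne_zero l]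
  exact congrArg List.sum (List.filter_congr fun x _ => by cases x <;> rfl)

theorem eq_of_getD_eq (hl : ∀ x ∈ l, 0 < x) (hl' : ∀ x ∈ l', 0 < x)
    (h : ∀ i, l.getD i 0 = l'.getD i 0) : l = l' := by
  have hlen : l.length = l'.length := by
    by_contra hne
    rcases Nat.lt_or_gt_of_ne hne with hlt | hlt
    · have := hl' _ (getD_mem_of_lt hlt)
      rw [← h, List.getD_eq_default _ _ le_rfl] at this
      exact this.false
    · have := hl _ (getD_mem_of_lt hlt)
      rw [h, List.getD_eq_default _ _ le_rfl] at this
      exact this.false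
  refine List.ext_getElem hlen fun i hi hi' => ?_
  simpa only [List.getD_eq_getElem _ _ hi, List.getD_eq_getElem _ _ hi'] using h i

theorem filter_mem_eq_of_pairwise_lt (hl : l.Pairwise (· < ·)) (hl' : l'.Pairwise (· < ·))
    (hsub : ∀ x ∈ l', x ∈ l) : l.filter (· ∈ l') = l' := by
  refine List.Perm.eq_of_pairwise' (hl.filter _) hl' ?_
  refine (List.perm_ext_iff_of_nodup (hl.filter _).nodup hl'.nodup).2 fun x => ?_
  simp only [List.mem_filter, decide_eq_true_eq]
  exact ⟨And.right, fun hx => ⟨hsub x hx, hx⟩⟩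

theorem exists_isPartition_getD_eq {f : ℕ → ℕ} (hf : Antitone f) {N : ℕ} (hN : f N = 0) :
    ∃ μ, IsPartition μ ∧ ∀ i, μ.getD i 0 = f i := by
  induction N generalizing f with
  | zero =>
    refine ⟨[], ⟨List.Pairwise.nil, by simp⟩, fun i => ?_⟩
    have := hf (Nat.zero_le i)
    rw [List.getD_nil]
    omega
  | succ N ih =>
    obtain ⟨μ, ⟨hμs, hμp⟩, hμf⟩ := ih (f := fun i => f (i + 1)) (fun a b h => hf (by omega)) hN
    rcases Nat.eq_zero_or_pos (f 0) with h0 | h0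
    · refine ⟨μ, ⟨hμs, hμp⟩, fun i => ?_⟩
      have := hf (Nat.zero_le i)
      have := hf (Nat.zero_le (i + 1))
      rw [hμf]
      omega
    refine ⟨f 0 :: μ, ⟨List.pairwise_cons.2 ⟨fun x hx => ?_, hμs⟩,
      List.forall_mem_cons.2 ⟨h0, hμp⟩⟩, fun i => ?_⟩
    · obtain ⟨j, -, rfl⟩ := mem_iff_exists_getD.1 hx
      rw [hμf]
      exact hf (Nat.zero_le _)
    · cases i with
      | zero => rfl
      | succ i => rw [List.getD_cons_succ, hμf]

end Lists

theorem add_sum_range_eq_of_eq_add {c a : ℕ → ℕ} (h : ∀ i, c i = c (i + 1) + a i) (N : ℕ) :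
    c N + ∑ i ∈ range N, a i = c 0 := by
  induction N with
  | zero => simp
  | succ N ih =>
    rw [sum_range_succ, ← ih, h N]
    ring

theorem le_and_antitone_tsub_of_add_le_add {q c : ℕ → ℕ} {N : ℕ}
    (hstep : ∀ i, q (i + 1) + c i ≤ q i + c (i + 1)) (hc : ∀ i, N ≤ i → c i = 0) :
    (∀ i, c i ≤ q i) ∧ Antitone (fun i => q i - c i) := by
  have hle : ∀ k i, N ≤ i + k → c i ≤ q i := by
    intro k
    induction k with
    | zero => intro i hi; rw [hc i hi]; exact Nat.zero_le _
    | succ k ih =>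
      intro i hi
      have := ih (i + 1) (by omega)
      have := hstep i
      omega
  refine ⟨fun i => hle N i (by omega), antitone_nat_of_succ_le fun i => ?_⟩
  have := hle N i (by omega)
  have := hle N (i + 1) (by omega)
  have := hstep i
  omega

theorem Nat.div_lt_div_of_mod_lt {a b s : ℕ} (hba : b ≤ a) (h : a % s < b % s) : b / s < a / s := by
  rcases (Nat.div_le_div_right (c := s) hba).lt_or_eq with hlt | heq
  · exact hlt
  · have := Nat.div_add_mod a s
    have := Nat.div_add_mod b s
    rw [heq] at *
    omega

theorem Nat.div_eq_div_add_sub_div_add {a b s : ℕ} (hs : 0 < s) (hba : b ≤ a) :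
    a / s = b / s + (a - b) / s + if a % s < b % s then 1 else 0 := by
  obtain ⟨d, rfl⟩ := Nat.exists_eq_add_of_le hba
  have := Nat.mod_lt b hs
  have := Nat.mod_lt d hs
  have hcarry : (b + d) % s < b % s ↔ s ≤ b % s + d % s := by
    rw [Nat.add_mod]
    rcases lt_or_ge (b % s + d % s) s with h | h
    · rw [Nat.mod_eq_of_lt h]
      omega
    · rw [Nat.mod_eq_sub_mod h, Nat.mod_eq_of_lt (by omega)]
      omega
  rw [Nat.add_div hs, Nat.add_sub_cancel_left]
  simp only [hcarry]

theorem card_filter_Icc_mod_eq_zero {s a b : ℕ} (hba : b ≤ a) :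
    #{j ∈ Icc 1 a | b < j ∧ (a - j + 1) % s = 0} = (a - b) / s := by
  rw [← Nat.card_multiples (a - b) s]
  refine card_nbij' (fun j => a - j) (fun k => a - k) ?_ ?_ ?_ ?_
  · intro j hj
    simp only [mem_coe, mem_filter, mem_Icc, mem_range] at hj ⊢
    exact ⟨by omega, Nat.dvd_of_mod_eq_zero hj.2.2⟩
  · intro k hk
    simp only [mem_coe, mem_filter, mem_Icc, mem_range] at hk ⊢
    refine ⟨⟨by omega, by omega⟩, by omega, ?_⟩
    rw [show a - (a - k) + 1 = k + 1 by omega]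
    exact Nat.mod_eq_zero_of_dvd hk.2
  · intro j hj
    simp only [mem_coe, mem_filter, mem_Icc] at hj
    dsimp only
    omega
  · intro k hk
    simp only [mem_coe, mem_filter, mem_range] at hk
    dsimp only
    omega

section Statistics

variable {s : ℕ} {l : List ℕ}

/-- Summing `(λ_i - λ_{i+1}) / s` over the rows telescopes to `λ_1 / s`, up to one unit lost
at each row where the remainder mod `s` goes up. -/
theorem partCs_add_card_mod_lt (hs : 0 < s) (hl : l.Pairwise (· ≥ ·)) :
    partCs s l + #{i ∈ range l.length | l.getD i 0 % s < l.getD (i + 1) 0 % s} =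
      l.getD 0 0 / s := by
  have hanti := antitone_getD hl
  have hrow : ∀ i, l.getD i 0 / s = l.getD (i + 1) 0 / s +
      ((l.getD i 0 - l.getD (i + 1) 0) / s +
        if l.getD i 0 % s < l.getD (i + 1) 0 % s then 1 else 0) := fun i => by
    rw [Nat.div_eq_div_add_sub_div_add hs (hanti (Nat.le_succ i)), add_assoc]
  have := add_sum_range_eq_of_eq_add hrow l.length
  rw [List.getD_eq_default _ _ le_rfl, Nat.zero_div, zero_add, sum_add_distrib,
    ← card_filter] at this
  rw [← this, partCs]
  congr 1
  exact sum_congr rfl fun i _ => card_filter_Icc_mod_eq_zero (hanti (Nat.le_succ i))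

theorem partRs_add_length_partRem (s : ℕ) (l : List ℕ) :
    partRs s l + (partRem s l).length = l.length := by
  rw [partRs, partRem, ← List.countP_eq_length_filter, List.countP_map,
    List.length_eq_countP_add_countP (fun x => decide (x % s = 0))]
  congr 1
  exact List.countP_congr fun x _ => by simp

end Statistics

structure IsPlacement (ρ γ : List ℕ) : Prop where
  pairwise_lt : γ.Pairwise (· < ·)
  pos : ∀ x ∈ γ, 0 < x
  length_eq : γ.length = ρ.length

/-- The remainder placed in (1-indexed) row `t`: `ρ_j` if `t = γ_j`, and `0` if `t ∉ γ`. -/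
def remAt (ρ γ : List ℕ) (t : ℕ) : ℕ := ρ.getD (γ.idxOf t) 0

def carry (ρ γ : List ℕ) (t : ℕ) : ℕ :=
  #{j ∈ range γ.length | dseq ρ γ j = 1 ∧ t < γ.getD j 0}

def IsBreakAt (ρ γ : List ℕ) (t : ℕ) : Prop :=
  ∃ j < γ.length, γ.getD j 0 = t ∧ dseq ρ γ j = 1

section Placement

variable {s : ℕ} {ρ γ : List ℕ} {i j k t L : ℕ}

theorem dseq_eq_zero_or_one : dseq ρ γ j = 0 ∨ dseq ρ γ j = 1 := by
  unfold dseq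
  split_ifs <;> simp

theorem dseq_eq_one_iff : dseq ρ γ j = 1 ↔
    ¬(0 < j ∧ ρ.getD j 0 ≤ ρ.getD (j - 1) 0 ∧ γ.getD j 0 = γ.getD (j - 1) 0 + 1) := by
  unfold dseq
  split_ifs <;> simp_all

theorem remAt_map_self (g : ℕ → ℕ) (t : ℕ) : remAt (γ.map g) γ t = if t ∈ γ then g t else 0 := by
  unfold remAt
  split_ifs with ht
  · have hlt := List.idxOf_lt_length_of_mem ht
    rw [List.getD_eq_getElem _ _ (by simpa using hlt), List.getElem_map, List.getElem_idxOf]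
  · rw [List.idxOf_eq_length ht, List.getD_eq_default _ _ (by simp)]

theorem carry_eq_zero (h : ∀ x ∈ γ, x ≤ t) : carry ρ γ t = 0 := by
  refine card_eq_zero.2 (filter_eq_empty_iff.2 fun j hj => ?_)
  have := h _ (getD_mem_of_lt (mem_range.1 hj))
  omega

theorem sum_carry (hL : ∀ x ∈ γ, x ≤ L) :
    ∑ i ∈ range L, carry ρ γ (i + 1) = ∑ j ∈ range γ.length, dseq ρ γ j * (γ.getD j 0 - 1) := by
  simp only [carry, card_filter]
  rw [sum_comm]
  refine sum_congr rfl fun j hj => ?_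
  have hγj := hL _ (getD_mem_of_lt (mem_range.1 hj))
  rcases dseq_eq_zero_or_one (ρ := ρ) (γ := γ) (j := j) with hd | hd
  · simp [hd]
  · simp only [hd, true_and, one_mul]
    rw [← card_filter, ← card_range (γ.getD j 0 - 1)]
    congr 1
    ext i
    simp only [mem_filter, mem_range]
    omega

theorem carry_succ_of_not_isBreakAt (h : ¬IsBreakAt ρ γ (t + 1)) :
    carry ρ γ t = carry ρ γ (t + 1) := by
  refine congrArg card (filter_congr fun j hj => and_congr_right fun hd => ⟨fun ht => ?_, by omega⟩)
  rcases (Nat.succ_le_of_lt ht).eq_or_lt with he | hlt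
  · exact absurd ⟨j, mem_range.1 hj, he.symm, hd⟩ h
  · exact hlt

namespace IsPlacement

variable (hγ : IsPlacement ρ γ)
include hγ

theorem getD_lt_getD (hjk : j < k) (hk : k < γ.length) : γ.getD j 0 < γ.getD k 0 := by
  rw [List.getD_eq_getElem _ _ (hjk.trans hk), List.getD_eq_getElem _ _ hk]
  exact List.pairwise_iff_getElem.1 hγ.pairwise_lt _ _ _ hk hjk

theorem getD_inj (hj : j < γ.length) (hk : k < γ.length) :
    γ.getD j 0 = γ.getD k 0 ↔ j = k := by
  refine ⟨fun h => ?_, fun h => h ▸ rfl⟩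
  rcases lt_trichotomy j k with hjk | rfl | hkj
  · exact absurd h (hγ.getD_lt_getD hjk hk).ne
  · rfl
  · exact absurd h (hγ.getD_lt_getD hkj hj).ne'

theorem eq_succ_of_getD_add_one (hj : j < γ.length) (hk : k < γ.length)
    (h : γ.getD j 0 + 1 = γ.getD k 0) : k = j + 1 := by
  rcases lt_trichotomy k (j + 1) with hkj | rfl | hjk
  · rcases (Nat.le_of_lt_succ hkj).lt_or_eq with hkj | rfl
    · have := hγ.getD_lt_getD hkj hj
      omega
    · omega
  · rfl
  · have := hγ.getD_lt_getD (Nat.lt_add_one j) (hjk.trans hk)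
    have := hγ.getD_lt_getD hjk hk
    omega

theorem le_getD_last (ht : t ∈ γ) : t ≤ γ.getD (γ.length - 1) 0 := by
  obtain ⟨j, hj, rfl⟩ := mem_iff_exists_getD.1 ht
  rcases (Nat.le_sub_one_of_lt hj).lt_or_eq with h | h
  · exact (hγ.getD_lt_getD h (by omega)).le
  · rw [h]

theorem remAt_getD (hj : j < γ.length) : remAt ρ γ (γ.getD j 0) = ρ.getD j 0 := by
  rw [remAt, List.getD_eq_getElem _ _ hj, hγ.pairwise_lt.nodup.idxOf_getElem]

theorem remAt_of_not_mem (ht : t ∉ γ) : remAt ρ γ t = 0 := by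
  rw [remAt, List.idxOf_eq_length ht, hγ.length_eq, List.getD_eq_default _ _ le_rfl]

theorem map_remAt : γ.map (remAt ρ γ) = ρ := by
  refine List.ext_getElem (by rw [List.length_map, hγ.length_eq]) fun n hn hn' => ?_
  rw [List.getElem_map, ← List.getD_eq_getElem γ 0, hγ.remAt_getD (by simpa using hn),
    List.getD_eq_getElem]

theorem carry_succ_of_isBreakAt (h : IsBreakAt ρ γ (t + 1)) :
    carry ρ γ t = carry ρ γ (t + 1) + 1 := by
  obtain ⟨j₀, hj₀, hγj₀, hdj₀⟩ := h
  rw [carry, carry, ← card_insert_of_notMem (a := j₀)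
    (by simp only [mem_filter, hγj₀, lt_self_iff_false, and_false, not_false_eq_true])]
  congr 1
  ext j
  simp only [mem_filter, mem_range, mem_insert]
  constructor
  · rintro ⟨hj, hd, ht⟩
    rcases (Nat.succ_le_of_lt ht).eq_or_lt with he | hlt
    · exact Or.inl ((hγ.getD_inj hj hj₀).1 (he.symm.trans hγj₀.symm))
    · exact Or.inr ⟨hj, hd, hlt⟩
  · rintro (rfl | ⟨hj, hd, ht⟩)
    · exact ⟨hj₀, hdj₀, by omega⟩
    · exact ⟨hj, hd, by omega⟩

variable (hρ : ∀ x ∈ ρ, 1 ≤ x ∧ x ≤ s - 1)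
include hρ

theorem remAt_pos_iff : 0 < remAt ρ γ t ↔ t ∈ γ := by
  refine ⟨fun h => by_contra fun ht => by rw [hγ.remAt_of_not_mem ht] at h; exact h.false,
    fun ht => ?_⟩
  obtain ⟨j, hj, rfl⟩ := mem_iff_exists_getD.1 ht
  rw [hγ.remAt_getD hj]
  exact (hρ _ (getD_mem_of_lt (hγ.length_eq ▸ hj))).1

theorem remAt_lt (hs : 0 < s) : remAt ρ γ t < s := by
  by_cases ht : t ∈ γ
  · obtain ⟨j, hj, rfl⟩ := mem_iff_exists_getD.1 ht
    rw [hγ.remAt_getD hj]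
    have := hρ _ (getD_mem_of_lt (hγ.length_eq ▸ hj))
    omega
  · rw [hγ.remAt_of_not_mem ht]
    exact hs

theorem remAt_lt_remAt_succ_iff : remAt ρ γ t < remAt ρ γ (t + 1) ↔ IsBreakAt ρ γ (t + 1) := by
  constructor
  · intro hlt
    obtain ⟨j, hj, hγj⟩ := mem_iff_exists_getD.1 ((hγ.remAt_pos_iff hρ (t := t + 1)).1 (by omega))
    refine ⟨j, hj, hγj, by_contra fun hd => ?_⟩
    obtain ⟨hj0, hρj, hγj'⟩ := not_not.1 (mt dseq_eq_one_iff.2 hd)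
    rw [← hγj, hγ.remAt_getD hj, show t = γ.getD (j - 1) 0 by omega,
      hγ.remAt_getD (by omega)] at hlt
    omega
  · rintro ⟨j, hj, hγj, hd⟩
    have hρj := (hρ _ (getD_mem_of_lt (hγ.length_eq ▸ hj))).1
    rw [← hγj, hγ.remAt_getD hj]
    by_cases ht : t ∈ γ
    · obtain ⟨k, hk, rfl⟩ := mem_iff_exists_getD.1 ht
      obtain rfl := hγ.eq_succ_of_getD_add_one hk hj hγj.symm
      rw [hγ.remAt_getD hk]
      have := dseq_eq_one_iff.1 hd
      simp only [Nat.add_sub_cancel] at this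
      omega
    · rwa [hγ.remAt_of_not_mem ht]

theorem carry_one_eq_card (hL : ∀ x ∈ γ, x ≤ L) :
    carry ρ γ 1 = #{i ∈ range L | remAt ρ γ (i + 1) < remAt ρ γ (i + 1 + 1)} := by
  have hstep : ∀ i, carry ρ γ (i + 1) = carry ρ γ (i + 1 + 1) +
      if remAt ρ γ (i + 1) < remAt ρ γ (i + 1 + 1) then 1 else 0 := fun i => by
    split_ifs with h
    · exact hγ.carry_succ_of_isBreakAt ((hγ.remAt_lt_remAt_succ_iff hρ).1 h)
    · rw [carry_succ_of_not_isBreakAt (mt (hγ.remAt_lt_remAt_succ_iff hρ).2 h), add_zero]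
  have := add_sum_range_eq_of_eq_add hstep L
  rwa [carry_eq_zero fun x hx => (hL x hx).trans (Nat.le_succ L), zero_add, ← card_filter,
    eq_comm] at this

theorem filter_map_remAt (hL : ∀ x ∈ γ, x ≤ L) :
    ((List.range L).map fun i => remAt ρ γ (i + 1)).filter (· ≠ 0) = ρ := by
  have hrange : (List.range L).map (fun i => remAt ρ γ (i + 1)) =
      (List.range' 1 L).map (remAt ρ γ) := by
    rw [List.range'_eq_map_range, List.map_map]
    exact List.map_congr_left fun i _ => by simp [add_comm]
  rw [hrange, List.filter_map,
    List.filter_congr (q := (· ∈ γ)) fun t _ => by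
      simp [← hγ.remAt_pos_iff hρ, Nat.pos_iff_ne_zero],
    filter_mem_eq_of_pairwise_lt List.pairwise_lt_range' hγ.pairwise_lt fun x hx => ?_,
    hγ.map_remAt]
  have := hL x hx
  have := hγ.pos x hx
  rw [List.mem_range'_1]
  omega

end IsPlacement

end Placement

/-- Rows are 0-indexed, positions in `γ` 1-indexed: row `i` reads position `i + 1`. -/
def row (s : ℕ) (ρ γ μ : List ℕ) (i : ℕ) : ℕ :=
  μ.getD i 0 + s * carry ρ γ (i + 1) + remAt ρ γ (i + 1)

def numRows (γ μ : List ℕ) : ℕ := max (γ.getD (γ.length - 1) 0) μ.length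

def assemble (s : ℕ) (ρ γ μ : List ℕ) : List ℕ :=
  (List.range (numRows γ μ)).map (row s ρ γ μ)

theorem headD_eq_getD (l : List ℕ) : l.headD 0 = l.getD 0 0 := by
  cases l <;> rfl

theorem row_eq_mul_add {s : ℕ} {ρ γ μ : List ℕ} (hμs : ∀ x ∈ μ, s ∣ x) (i : ℕ) :
    row s ρ γ μ i = s * (μ.getD i 0 / s + carry ρ γ (i + 1)) + remAt ρ γ (i + 1) := by
  have hdvd : s ∣ μ.getD i 0 := by
    rcases lt_or_ge i μ.length with h | h
    · exact hμs _ (getD_mem_of_lt h)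
    · rw [List.getD_eq_default _ _ h]
      exact dvd_zero s
  rw [row, Nat.mul_add, Nat.mul_div_cancel' hdvd]

theorem length_assemble (s : ℕ) (ρ γ μ : List ℕ) : (assemble s ρ γ μ).length = numRows γ μ := by
  simp [assemble]

namespace IsPlacement

variable {s : ℕ} {ρ γ γ' μ μ' : List ℕ} {i t : ℕ} (hγ : IsPlacement ρ γ)
include hγ

theorem le_numRows (ht : t ∈ γ) : t ≤ numRows γ μ :=
  (hγ.le_getD_last ht).trans (le_max_left _ _)

theorem row_eq_zero (h : numRows γ μ ≤ i) : row s ρ γ μ i = 0 := by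
  have hμ : μ.length ≤ i := (le_max_right _ _).trans h
  have hγi : i + 1 ∉ γ := fun hi => by
    have := hγ.le_numRows (μ := μ) hi
    omega
  rw [row, List.getD_eq_default _ _ hμ, hγ.remAt_of_not_mem hγi,
    carry_eq_zero fun x hx => (hγ.le_numRows (μ := μ) hx).trans (by omega), mul_zero,
    add_zero, add_zero]

theorem getD_assemble : (assemble s ρ γ μ).getD i 0 = row s ρ γ μ i := by
  rcases lt_or_ge i (numRows γ μ) with h | h
  · rw [List.getD_eq_getElem _ _ (by simpa [assemble] using h)]
    simp [assemble]
  · rw [List.getD_eq_default _ _ (by simpa [assemble] using h), hγ.row_eq_zero h]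

variable (hρ : ∀ x ∈ ρ, 1 ≤ x ∧ x ≤ s - 1)
include hρ

theorem sum_assemble : (assemble s ρ γ μ).sum =
    μ.sum + ρ.sum + s * ∑ j ∈ range γ.length, dseq ρ γ j * (γ.getD j 0 - 1) := by
  have hL : ∀ x ∈ γ, x ≤ numRows γ μ := fun x hx => hγ.le_numRows hx
  have hrem : ∑ i ∈ range (numRows γ μ), remAt ρ γ (i + 1) = ρ.sum := by
    rw [← sum_map_range, ← sum_filter_ne_zero, hγ.filter_map_remAt hρ hL]
  have hμL : μ.length ≤ numRows γ μ := le_max_right _ _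
  rw [assemble, sum_map_range]
  simp only [row, sum_add_distrib, ← mul_sum]
  rw [sum_range_getD hμL, sum_carry hL, hrem]
  ring

variable (hs : 0 < s)
include hs

theorem antitone_row (hμ : μ.Pairwise (· ≥ ·)) : Antitone (row s ρ γ μ) := by
  refine antitone_nat_of_succ_le fun i => ?_
  have : μ.getD (i + 1) 0 ≤ μ.getD i 0 := antitone_getD hμ (Nat.le_succ i)
  have := hγ.remAt_lt hρ hs (t := i + 1 + 1)
  unfold row
  by_cases h : IsBreakAt ρ γ (i + 1 + 1)
  · rw [hγ.carry_succ_of_isBreakAt h, Nat.mul_add_one]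
    omega
  · rw [carry_succ_of_not_isBreakAt h]
    have := mt (hγ.remAt_lt_remAt_succ_iff hρ).1 h
    omega

/-- Up to row `γ_m` every row is at least the last placed remainder, by monotonicity. -/
theorem row_pos (hμ : IsPartition μ) (hi : i < numRows γ μ) : 0 < row s ρ γ μ i := by
  rcases lt_or_ge i μ.length with h | h
  · have := hμ.2 _ (getD_mem_of_lt h)
    unfold row
    omega
  have hlast : i < γ.getD (γ.length - 1) 0 := by
    unfold numRows at hi
    omega
  have hmem : γ.getD (γ.length - 1) 0 ∈ γ := getD_mem_of_lt <| Nat.sub_one_lt <| by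
    rintro h0
    rw [List.eq_nil_of_length_eq_zero h0] at hlast
    simp at hlast
  have hpos := hγ.pos _ hmem
  calc 0 < remAt ρ γ (γ.getD (γ.length - 1) 0) := (hγ.remAt_pos_iff hρ).2 hmem
    _ = remAt ρ γ (γ.getD (γ.length - 1) 0 - 1 + 1) := by rw [Nat.sub_add_cancel hpos]
    _ ≤ row s ρ γ μ (γ.getD (γ.length - 1) 0 - 1) := Nat.le_add_left _ _
    _ ≤ row s ρ γ μ i := hγ.antitone_row hρ hs hμ.1 (by omega)

theorem isPartition_assemble (hμ : IsPartition μ) : IsPartition (assemble s ρ γ μ) := by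
  refine ⟨?_, ?_⟩
  · rw [assemble, List.pairwise_map]
    exact List.pairwise_lt_range.imp fun h => hγ.antitone_row hρ hs hμ.1 h.le
  · simp only [assemble, List.mem_map, List.mem_range]
    rintro _ ⟨i, hi, rfl⟩
    exact hγ.row_pos hρ hs hμ hi

section Divisible

variable (hμs : ∀ x ∈ μ, s ∣ x)
include hμs

theorem row_mod : row s ρ γ μ i % s = remAt ρ γ (i + 1) := by
  rw [row_eq_mul_add hμs, Nat.mul_add_mod, Nat.mod_eq_of_lt (hγ.remAt_lt hρ hs)]

theorem row_div : row s ρ γ μ i / s = μ.getD i 0 / s + carry ρ γ (i + 1) := by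
  rw [row_eq_mul_add hμs, Nat.mul_add_div hs, Nat.div_eq_of_lt (hγ.remAt_lt hρ hs),
    add_zero]

theorem partRem_assemble : partRem s (assemble s ρ γ μ) = ρ := by
  rw [partRem, assemble, List.map_map,
    List.map_congr_left (f := (· % s) ∘ row s ρ γ μ) fun i _ => hγ.row_mod hρ hs hμs (i := i)]
  exact hγ.filter_map_remAt hρ fun x hx => hγ.le_numRows hx

theorem partRs_assemble : partRs s (assemble s ρ γ μ) = numRows γ μ - γ.length := by
  have := partRs_add_length_partRem s (assemble s ρ γ μ)
  rw [hγ.partRem_assemble hρ hs hμs, ← hγ.length_eq, length_assemble] at this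
  omega

theorem partCs_assemble (hμ : IsPartition μ) : partCs s (assemble s ρ γ μ) = μ.headD 0 / s := by
  have h := partCs_add_card_mod_lt hs (hγ.isPartition_assemble hρ hs hμ).1
  simp only [hγ.getD_assemble, hγ.row_mod hρ hs hμs, length_assemble] at h
  rw [← hγ.carry_one_eq_card hρ fun x hx => hγ.le_numRows hx, hγ.row_div hρ hs hμs,
    zero_add] at h
  rw [headD_eq_getD]
  omega

theorem assemble_conditions_iff (hμ : IsPartition μ) {n r c : ℕ} :
    ((assemble s ρ γ μ).sum = n ∧ partRem s (assemble s ρ γ μ) = ρ ∧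
        partRs s (assemble s ρ γ μ) = r ∧ partCs s (assemble s ρ γ μ) = c) ↔
      (n = μ.sum + ρ.sum + s * ∑ j ∈ range ρ.length, dseq ρ γ j * (γ.getD j 0 - 1) ∧
        ((μ = [] ∧ c = 0 ∧ r = γ.getD (ρ.length - 1) 0 - ρ.length) ∨
          (μ ≠ [] ∧ c = μ.headD 0 / s ∧
            r = max (γ.getD (ρ.length - 1) 0) μ.length - ρ.length))) := by
  rw [hγ.sum_assemble hρ, hγ.partRem_assemble hρ hs hμs, hγ.partRs_assemble hρ hs hμs,
    hγ.partCs_assemble hρ hs hμs hμ, numRows, hγ.length_eq]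
  rcases eq_or_ne μ [] with rfl | hne
  · simp [eq_comm, and_comm]
  · simp [hne, eq_comm, and_comm]

end Divisible

theorem eq_of_assemble_eq (hγ' : IsPlacement ρ γ') (hμ : ∀ x ∈ μ, 0 < x) (hμ' : ∀ x ∈ μ', 0 < x)
    (hμs : ∀ x ∈ μ, s ∣ x) (hμs' : ∀ x ∈ μ', s ∣ x)
    (h : assemble s ρ γ μ = assemble s ρ γ' μ') : γ = γ' ∧ μ = μ' := by
  have hrow : ∀ i, row s ρ γ μ i = row s ρ γ' μ' i := fun i => by
    rw [← hγ.getD_assemble, h, hγ'.getD_assemble]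
  have hmem : ∀ t, t ∈ γ ↔ t ∈ γ' := by
    rintro (_ | t)
    · exact iff_of_false (fun h => (hγ.pos 0 h).false) (fun h => (hγ'.pos 0 h).false)
    · rw [← hγ.remAt_pos_iff hρ, ← hγ'.remAt_pos_iff hρ, ← hγ.row_mod hρ hs hμs, hrow,
        hγ'.row_mod hρ hs hμs']
  obtain rfl : γ = γ' := List.Perm.eq_of_pairwise' hγ.pairwise_lt hγ'.pairwise_lt <|
    (List.perm_ext_iff_of_nodup hγ.pairwise_lt.nodup hγ'.pairwise_lt.nodup).2 hmem
  refine ⟨rfl, eq_of_getD_eq hμ hμ' fun i => ?_⟩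
  have := hrow i
  unfold row at this
  omega

end IsPlacement

def remPositions (s : ℕ) (l : List ℕ) : List ℕ :=
  (List.range' 1 l.length).filter fun t => l.getD (t - 1) 0 % s ≠ 0

section Decomposition

variable {s : ℕ} {ρ l : List ℕ} {t : ℕ}

theorem mem_remPositions :
    t ∈ remPositions s l ↔ 1 ≤ t ∧ t ≤ l.length ∧ l.getD (t - 1) 0 % s ≠ 0 := by
  simp only [remPositions, List.mem_filter, List.mem_range'_1, decide_eq_true_eq]
  omega

theorem partRem_eq_map_remPositions :
    partRem s l = (remPositions s l).map fun t => l.getD (t - 1) 0 % s := by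
  have hl : l = (List.range' 1 l.length).map fun t => l.getD (t - 1) 0 := by
    refine List.ext_getElem (by simp) fun k hk _ => ?_
    simp [List.getElem?_eq_getElem hk]
  rw [partRem, hl, List.map_map, List.filter_map, ← hl]
  rfl

theorem isPlacement_remPositions (h : partRem s l = ρ) : IsPlacement ρ (remPositions s l) :=
  ⟨(List.pairwise_lt_range').filter _, fun _ ht => (mem_remPositions.1 ht).1,
    by rw [← h, partRem_eq_map_remPositions, List.length_map]⟩

theorem remAt_remPositions (h : partRem s l = ρ) (i : ℕ) :
    remAt ρ (remPositions s l) (i + 1) = l.getD i 0 % s := by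
  rw [← h, partRem_eq_map_remPositions, remAt_map_self, Nat.add_sub_cancel]
  split_ifs with hi
  · rfl
  · rw [mem_remPositions, Nat.add_sub_cancel] at hi
    rcases lt_or_ge i l.length with hil | hil
    · omega
    · rw [List.getD_eq_default _ _ hil, Nat.zero_mod]

theorem exists_assemble_remPositions_eq (hs : 0 < s) (hρ : ∀ x ∈ ρ, 1 ≤ x ∧ x ≤ s - 1)
    (hl : IsPartition l) (hρl : partRem s l = ρ) :
    ∃ μ, IsPartition μ ∧ (∀ x ∈ μ, s ∣ x) ∧ assemble s ρ (remPositions s l) μ = l := by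
  set γ := remPositions s l
  have hγ : IsPlacement ρ γ := isPlacement_remPositions hρl
  have hrem := remAt_remPositions hρl
  have hstep : ∀ i, l.getD (i + 1) 0 / s + carry ρ γ (i + 1) ≤
      l.getD i 0 / s + carry ρ γ (i + 1 + 1) := fun i => by
    have hli : l.getD (i + 1) 0 ≤ l.getD i 0 := antitone_getD hl.1 (Nat.le_succ i)
    by_cases hb : IsBreakAt ρ γ (i + 1 + 1)
    · have := (hγ.remAt_lt_remAt_succ_iff hρ).2 hb
      rw [hrem, hrem] at this
      have := Nat.div_lt_div_of_mod_lt hli this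
      rw [hγ.carry_succ_of_isBreakAt hb]
      omega
    · rw [carry_succ_of_not_isBreakAt hb]
      have := Nat.div_le_div_right (c := s) hli
      omega
  obtain ⟨hle, hanti⟩ := le_and_antitone_tsub_of_add_le_add (q := fun i => l.getD i 0 / s)
    (c := fun i => carry ρ γ (i + 1)) (N := l.length) hstep fun i hi =>
    carry_eq_zero fun x hx => (mem_remPositions.1 hx).2.1.trans (by omega)
  obtain ⟨μ, hμ, hμf⟩ := exists_isPartition_getD_eq
    (f := fun i => s * (l.getD i 0 / s - carry ρ γ (i + 1)))
    (fun a b hab => Nat.mul_le_mul_left s (hanti hab)) (N := l.length)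
    (by rw [List.getD_eq_default _ _ le_rfl, Nat.zero_div, Nat.zero_sub, mul_zero])
  have hμs : ∀ x ∈ μ, s ∣ x := fun x hx => by
    obtain ⟨i, -, rfl⟩ := mem_iff_exists_getD.1 hx
    rw [hμf]
    exact dvd_mul_right _ _
  refine ⟨μ, hμ, hμs, eq_of_getD_eq (hγ.isPartition_assemble hρ hs hμ).2 hl.2 fun i => ?_⟩
  rw [hγ.getD_assemble, row, hμf, hrem, ← Nat.mul_add, Nat.sub_add_cancel (hle i),
    Nat.div_add_mod]

end Decomposition

theorem stmt10_general (s m : ℕ) (hs : 0 < s) (ρ : List ℕ)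
    (hρlen : ρ.length = m) (hρ : ∀ x ∈ ρ, 1 ≤ x ∧ x ≤ s - 1)
    (n r c : ℕ) :
    Nat.card {l : List ℕ // IsPartition l ∧ l.sum = n ∧ partRem s l = ρ ∧
        partRs s l = r ∧ partCs s l = c} =
    Nat.card {p : List ℕ × List ℕ //
        p.1.Pairwise (· < ·) ∧ (∀ x ∈ p.1, 0 < x) ∧ p.1.length = m ∧
        IsPartition p.2 ∧ (∀ x ∈ p.2, s ∣ x) ∧
        n = p.2.sum + ρ.sum +
          s * ∑ j ∈ Finset.range m, dseq ρ p.1 j * (p.1.getD j 0 - 1) ∧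
        ((p.2 = [] ∧ c = 0 ∧ r = p.1.getD (m - 1) 0 - m) ∨
         (p.2 ≠ [] ∧ c = p.2.headD 0 / s ∧
           r = max (p.1.getD (m - 1) 0) p.2.length - m))} := by
  subst hρlen
  symm
  refine Nat.card_eq_of_bijective (fun p => ⟨assemble s ρ p.1.1 p.1.2, ?_⟩) ⟨?_, ?_⟩
  · obtain ⟨⟨γ, μ⟩, hγs, hγp, hγlen, hμ, hμs, hconds⟩ := p
    have hγ : IsPlacement ρ γ := ⟨hγs, hγp, hγlen⟩
    exact ⟨hγ.isPartition_assemble hρ hs hμ, (hγ.assemble_conditions_iff hρ hs hμs hμ).2 hconds⟩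
  · rintro ⟨⟨γ, μ⟩, hγs, hγp, hγlen, hμ, hμs, _⟩ ⟨⟨γ', μ'⟩, hγs', hγp', hγlen', hμ', hμs', _⟩ h
    obtain ⟨rfl, rfl⟩ := IsPlacement.eq_of_assemble_eq ⟨hγs, hγp, hγlen⟩ hρ hs
      ⟨hγs', hγp', hγlen'⟩ hμ.2 hμ'.2 hμs hμs' (congrArg Subtype.val h)
    rfl
  · rintro ⟨l, hl, hconds⟩
    have hγ := isPlacement_remPositions hconds.2.1
    obtain ⟨μ, hμ, hμs, hμl⟩ := exists_assemble_remPositions_eq hs hρ hl hconds.2.1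
    refine ⟨⟨(remPositions s l, μ), hγ.pairwise_lt, hγ.pos, hγ.length_eq, hμ, hμs, ?_⟩,
      Subtype.ext hμl⟩
    rw [← hμl] at hconds
    exact (hγ.assemble_conditions_iff hρ hs hμs hμ).1 hconds

theorem stmt10 (s m : ℕ) (hs : 0 < s) (hm : 1 ≤ m) (ρ : List ℕ)
    (hρlen : ρ.length = m) (hρ : ∀ x ∈ ρ, 1 ≤ x ∧ x ≤ s - 1)
    (n r c : ℕ) (hn : 1 ≤ n) :
    Nat.card {l : List ℕ // IsPartition l ∧ l.sum = n ∧ partRem s l = ρ ∧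
        partRs s l = r ∧ partCs s l = c} =
    Nat.card {p : List ℕ × List ℕ //
        p.1.Pairwise (· < ·) ∧ (∀ x ∈ p.1, 0 < x) ∧ p.1.length = m ∧
        IsPartition p.2 ∧ (∀ x ∈ p.2, s ∣ x) ∧
        n = p.2.sum + ρ.sum +
          s * ∑ j ∈ Finset.range m, dseq ρ p.1 j * (p.1.getD j 0 - 1) ∧
        ((p.2 = [] ∧ c = 0 ∧ r = p.1.getD (m - 1) 0 - m) ∨
         (p.2 ≠ [] ∧ c = p.2.headD 0 / s ∧
           r = max (p.1.getD (m - 1) 0) p.2.length - m))} :=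
  stmt10_general s m hs ρ hρlen hρ n r c
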